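/- arXiv:1512.03711 — 2 statements merged into one kernel-verified Lean document; each statement's English description precedes it below -/
import Mathlib

section
/- Let L > 0 and let c : [0, L] → ℝ be twice continuously differentiable. Let D : [0, L] → ℝ be continuously differentiable with D(x) > 0 for all x, let v : [0, L] → ℝ be continuously differentiable, and let σ, f : [0, L] → ℝ be continuous with f(x) ≥ 0 and σ(x) + v'(x) > 0 for all x ∈ [0, L]. Suppose c satisfies the stationary advection–diffusion–reaction equation σ(x)·c(x) − (D·c')'(x) + (v·c)'(x) = f(x) for all x ∈ [0, L], together with the boundary conditions c'(0) = 0 and c(L) ≥ 0. Then c(x) ≥ 0 for all x ∈ [0, L]. -/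
/-!
At a negative minimum `x₀` of `c` the point cannot be `L`, and `c'(x₀) = 0` (by the Neumann
condition if `x₀ = 0`, by Fermat otherwise). The equation then reduces at `x₀` to
`D c'' = (σ + v') c - f < 0`, so `c'' (x₀) < 0`; but a one-sided second-order argument shows
that a minimum with `c' = 0` to the left of the right endpoint forces `c'' ≥ 0`.
-/

open Set Filter Topology

theorem HasDerivWithinAt.eventually_neg_nhdsGT {g : ℝ → ℝ} {g' x : ℝ}
    (hg : HasDerivWithinAt g g' (Ici x) x) (hgx : g x = 0) (hg' : g' < 0) :
    ∀ᶠ y in 𝓝[>] x, g y < 0 := by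
  have hslope : Tendsto (slope g x) (𝓝[>] x) (𝓝 g') :=
    (hasDerivWithinAt_iff_tendsto_slope' (lt_irrefl x)).mp (hasDerivWithinAt_Ioi_iff_Ici.mpr hg)
  filter_upwards [hslope.eventually_lt_const hg', self_mem_nhdsWithin] with y hy hxy
  rw [slope_def_field, hgx, sub_zero] at hy
  exact neg_of_div_neg_left hy (sub_nonneg.mpr hxy.le)

theorem IsMinOn.derivWithin_derivWithin_nonneg {c : ℝ → ℝ} {a b x : ℝ}
    (hmin : IsMinOn c (Icc a b) x) (hx : x ∈ Icc a b) (hxb : x < b)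
    (hc : DifferentiableOn ℝ c (Icc a b))
    (hc' : DifferentiableWithinAt ℝ (derivWithin c (Icc a b)) (Icc a b) x)
    (hcrit : derivWithin c (Icc a b) x = 0) :
    0 ≤ derivWithin (derivWithin c (Icc a b)) (Icc a b) x := by
  by_contra! hneg
  have hIcc : Icc a b ∈ 𝓝[≥] x :=
    mem_of_superset (Icc_mem_nhdsGE hxb) (Icc_subset_Icc_left hx.1)
  have hev := (hc'.hasDerivWithinAt.mono_of_mem_nhdsWithin hIcc).eventually_neg_nhdsGT hcrit hneg
  obtain ⟨u, hxu, hu⟩ := mem_nhdsGT_iff_exists_Ioo_subset.mp (hev.and (Ioo_mem_nhdsGT hxb))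
  obtain ⟨y, hy⟩ : (Ioo x u).Nonempty := nonempty_Ioo.mpr hxu
  have hyb : y < b := (hu hy).2.2
  have hsub : Icc x y ⊆ Icc a b := Icc_subset_Icc hx.1 hyb.le
  have hanti : StrictAntiOn c (Icc x y) := by
    refine strictAntiOn_of_deriv_neg (convex_Icc x y) (hc.continuousOn.mono hsub) fun z hz => ?_
    rw [interior_Icc] at hz
    have hz' : z ∈ Ioo x u := ⟨hz.1, hz.2.trans hy.2⟩
    rw [← derivWithin_of_mem_nhds (Icc_mem_nhds (hx.1.trans_lt hz.1) (hz.2.trans hyb))]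
    exact (hu hz').1
  exact (hanti (left_mem_Icc.mpr hy.1.le) (right_mem_Icc.mpr hy.1.le) hy.1).not_ge
    (hmin (hsub (right_mem_Icc.mpr hy.1.le)))

theorem IsMinOn.derivWithin_Icc_eq_zero {c : ℝ → ℝ} {a b x : ℝ}
    (hmin : IsMinOn c (Icc a b) x) (hx : x ∈ Ioo a b) :
    derivWithin c (Icc a b) x = 0 := by
  have hnhds : Icc a b ∈ 𝓝 x := Icc_mem_nhds hx.1 hx.2
  rw [derivWithin_of_mem_nhds hnhds, (hmin.isLocalMin hnhds).deriv_eq_zero]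

theorem adr_nonneg_dirichlet_general (L : ℝ) (hL : 0 < L)
    (c D v σ f : ℝ → ℝ)
    (hc : ContDiffOn ℝ 2 c (Set.Icc 0 L))
    (hD : ContDiffOn ℝ 1 D (Set.Icc 0 L))
    (hDpos : ∀ x ∈ Set.Icc (0 : ℝ) L, 0 < D x)
    (hv : ContDiffOn ℝ 1 v (Set.Icc 0 L))
    (hfpos : ∀ x ∈ Set.Icc (0 : ℝ) L, 0 ≤ f x)
    (hcoef : ∀ x ∈ Set.Icc (0 : ℝ) L,
      0 < σ x + derivWithin v (Set.Icc 0 L) x)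
    (heq : ∀ x ∈ Set.Icc (0 : ℝ) L,
      σ x * c x
        - derivWithin (fun y => D y * derivWithin c (Set.Icc 0 L) y)
            (Set.Icc 0 L) x
        + derivWithin (fun y => v y * c y) (Set.Icc 0 L) x = f x)
    (hbc0 : derivWithin c (Set.Icc 0 L) 0 = 0)
    (hbcL : 0 ≤ c L) :
    ∀ x ∈ Set.Icc (0 : ℝ) L, 0 ≤ c x := by
  obtain ⟨x₀, hx₀, hmin⟩ :=
    isCompact_Icc.exists_isMinOn (nonempty_Icc.mpr hL.le) hc.continuousOn
  intro x hx
  by_contra! hcx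
  have hcx₀ : c x₀ < 0 := (hmin hx).trans_lt hcx
  have hx₀L : x₀ < L := hx₀.2.lt_of_ne fun h => by rw [h] at hcx₀; linarith
  have hcrit : derivWithin c (Icc 0 L) x₀ = 0 := by
    rcases hx₀.1.eq_or_lt with h | h
    · rwa [← h]
    · exact hmin.derivWithin_Icc_eq_zero ⟨h, hx₀L⟩
  have hcdiff : DifferentiableOn ℝ c (Icc 0 L) := hc.differentiableOn two_ne_zero
  have hc'diff : DifferentiableWithinAt ℝ (derivWithin c (Icc 0 L)) (Icc 0 L) x₀ :=
    (hc.derivWithin (uniqueDiffOn_Icc hL) le_rfl).differentiableOn one_ne_zero x₀ hx₀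
  have hc'' := hmin.derivWithin_derivWithin_nonneg hx₀ hx₀L hcdiff hc'diff hcrit
  have heq₀ := heq x₀ hx₀
  rw [derivWithin_fun_mul (hD.differentiableOn one_ne_zero x₀ hx₀) hc'diff,
    derivWithin_fun_mul (hv.differentiableOn one_ne_zero x₀ hx₀) (hcdiff x₀ hx₀), hcrit]
    at heq₀
  nlinarith [mul_pos (hcoef x₀ hx₀) (neg_pos.mpr hcx₀), mul_nonneg (hDpos x₀ hx₀).le hc'',
    hfpos x₀ hx₀]

/-- maximum principle (nonnegativity) for the stationary
advection–diffusion–reaction problem `σ c − (D c')' + (v c)' = f` on `[0, L]`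
with `c'(0) = 0` and `c(L) ≥ 0`. -/
theorem adr_nonneg_dirichlet (L : ℝ) (hL : 0 < L)
    (c D v σ f : ℝ → ℝ)
    (hc : ContDiffOn ℝ 2 c (Set.Icc 0 L))
    (hD : ContDiffOn ℝ 1 D (Set.Icc 0 L))
    (hDpos : ∀ x ∈ Set.Icc (0 : ℝ) L, 0 < D x)
    (hv : ContDiffOn ℝ 1 v (Set.Icc 0 L))
    (hσ : ContinuousOn σ (Set.Icc 0 L))
    (hf : ContinuousOn f (Set.Icc 0 L))
    (hfpos : ∀ x ∈ Set.Icc (0 : ℝ) L, 0 ≤ f x)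
    (hcoef : ∀ x ∈ Set.Icc (0 : ℝ) L,
      0 < σ x + derivWithin v (Set.Icc 0 L) x)
    (heq : ∀ x ∈ Set.Icc (0 : ℝ) L,
      σ x * c x
        - derivWithin (fun y => D y * derivWithin c (Set.Icc 0 L) y)
            (Set.Icc 0 L) x
        + derivWithin (fun y => v y * c y) (Set.Icc 0 L) x = f x)
    (hbc0 : derivWithin c (Set.Icc 0 L) 0 = 0)
    (hbcL : 0 ≤ c L) :
    ∀ x ∈ Set.Icc (0 : ℝ) L, 0 ≤ c x :=
  adr_nonneg_dirichlet_general L hL c D v σ f hc hD hDpos hv hfpos hcoef heq hbc0 hbcL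
end

section
/- Let L > 0 and let φ : [0, L] → ℝ be twice continuously differentiable. Let D : [0, L] → ℝ be continuously differentiable with D(x) > 0 for all x, let v : [0, L] → ℝ be continuously differentiable, and let κ, f : [0, L] → ℝ be continuous with f(x) ≥ 0 and κ(x) + v'(x) > 0 for all x ∈ [0, L]. Suppose φ satisfies the stationary advection–diffusion–reaction equation κ(x)·φ(x) − (D·φ')'(x) + (v·φ)'(x) = f(x) for all x ∈ [0, L], together with the homogeneous Neumann boundary conditions φ'(0) = 0 and φ'(L) = 0. Then φ(x) ≥ 0 for all x ∈ [0, L]. -/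
/-!
At a minimum point `x₀` of `φ` on `[0, L]` the derivative `φ'(x₀)` vanishes (by Fermat's rule
inside, by the Neumann conditions at the ends) and `φ''(x₀) ≥ 0` (by the second-order Taylor
expansion). Expanding the equation by the product rule, at `x₀` it reads
`(κ + v') φ(x₀) = f + D φ''(x₀) ≥ 0`, so `φ(x₀) ≥ 0` and hence `φ ≥ φ(x₀) ≥ 0`.
-/

open Set Filter Topology

theorem IsMinOn.derivWithin_Icc_eq_zero_s6 {f : ℝ → ℝ} {a b x₀ : ℝ}
    (hmin : IsMinOn f (Icc a b) x₀) (hx₀ : x₀ ∈ Icc a b)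
    (ha : derivWithin f (Icc a b) a = 0) (hb : derivWithin f (Icc a b) b = 0) :
    derivWithin f (Icc a b) x₀ = 0 := by
  rcases hx₀.1.eq_or_lt with rfl | hax₀
  · exact ha
  rcases hx₀.2.eq_or_lt with rfl | hx₀b
  · exact hb
  have hnhds : Icc a b ∈ 𝓝 x₀ := Icc_mem_nhds hax₀ hx₀b
  rw [derivWithin_of_mem_nhds hnhds]
  exact (hmin.isLocalMin hnhds).deriv_eq_zero

theorem taylorWithinEval_two_of_derivWithin_eq_zero {f : ℝ → ℝ} {s : Set ℝ} {x₀ : ℝ}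
    (hd : derivWithin f s x₀ = 0) (x : ℝ) :
    taylorWithinEval f 2 s x₀ x =
      f x₀ + derivWithin (derivWithin f s) s x₀ / 2 * (x - x₀) ^ 2 := by
  simp [taylor_within_apply, iteratedDerivWithin_succ', hd]
  ring

theorem IsMinOn.derivWithin_derivWithin_nonneg_s6 {f : ℝ → ℝ} {s : Set ℝ} {x₀ : ℝ}
    (hs : Convex ℝ s) (hf : ContDiffOn ℝ 2 f s) (hmin : IsMinOn f s x₀) (hx₀ : x₀ ∈ s)
    (hd : derivWithin f s x₀ = 0) :
    0 ≤ derivWithin (derivWithin f s) s x₀ := by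
  by_cases hacc : AccPt x₀ (𝓟 s)
  swap
  · rw [derivWithin_zero_of_not_accPt hacc]
  have := accPt_principal_iff_nhdsWithin.1 hacc
  set c := derivWithin (derivWithin f s) s x₀
  have hlim : Tendsto (fun x ↦ (f x - f x₀) / (x - x₀) ^ 2) (𝓝[s \ {x₀}] x₀) (𝓝 (c / 2)) := by
    have htaylor : Tendsto (fun x ↦ (f x - taylorWithinEval f 2 s x₀ x) / (x - x₀) ^ 2 + c / 2)
        (𝓝[s \ {x₀}] x₀) (𝓝 (0 + c / 2)) :=
      ((Real.taylor_tendsto hs hx₀ hf).mono_left (nhdsWithin_mono _ sdiff_subset)).add_const _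
    rw [zero_add] at htaylor
    refine htaylor.congr' (eventually_nhdsWithin_of_forall fun x hx ↦ ?_)
    have : (x - x₀) ^ 2 ≠ 0 := pow_ne_zero _ (sub_ne_zero.2 hx.2)
    rw [taylorWithinEval_two_of_derivWithin_eq_zero hd, ← sub_sub, sub_div,
      mul_div_cancel_right₀ _ this, sub_add_cancel]
  have hnonneg : ∀ᶠ x in 𝓝[s \ {x₀}] x₀, 0 ≤ (f x - f x₀) / (x - x₀) ^ 2 :=
    eventually_nhdsWithin_of_forall fun x hx ↦ div_nonneg (sub_nonneg.2 (hmin hx.1)) (sq_nonneg _)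
  linarith [ge_of_tendsto hlim hnonneg]

theorem adr_nonneg_neumann_general (L : ℝ) (hL : 0 < L)
    (φ D v κ f : ℝ → ℝ)
    (hφ : ContDiffOn ℝ 2 φ (Set.Icc 0 L))
    (hD : ContDiffOn ℝ 1 D (Set.Icc 0 L))
    (hDpos : ∀ x ∈ Set.Icc (0 : ℝ) L, 0 < D x)
    (hv : ContDiffOn ℝ 1 v (Set.Icc 0 L))
    (hfpos : ∀ x ∈ Set.Icc (0 : ℝ) L, 0 ≤ f x)
    (hcoef : ∀ x ∈ Set.Icc (0 : ℝ) L,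
      0 < κ x + derivWithin v (Set.Icc 0 L) x)
    (heq : ∀ x ∈ Set.Icc (0 : ℝ) L,
      κ x * φ x
        - derivWithin (fun y => D y * derivWithin φ (Set.Icc 0 L) y)
            (Set.Icc 0 L) x
        + derivWithin (fun y => v y * φ y) (Set.Icc 0 L) x = f x)
    (hbc0 : derivWithin φ (Set.Icc 0 L) 0 = 0)
    (hbcL : derivWithin φ (Set.Icc 0 L) L = 0) :
    ∀ x ∈ Set.Icc (0 : ℝ) L, 0 ≤ φ x := by
  set s := Icc (0 : ℝ) L
  have hφ₁ : DifferentiableOn ℝ φ s := hφ.differentiableOn two_ne_zero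
  have hφ₂ : DifferentiableOn ℝ (derivWithin φ s) s :=
    (hφ.derivWithin (uniqueDiffOn_Icc hL) (m := 1) le_rfl).differentiableOn one_ne_zero
  obtain ⟨x₀, hx₀, hmin⟩ :=
    isCompact_Icc.exists_isMinOn (nonempty_Icc.2 hL.le) hφ₁.continuousOn
  have hcrit : derivWithin φ s x₀ = 0 := hmin.derivWithin_Icc_eq_zero_s6 hx₀ hbc0 hbcL
  have hconvex : 0 ≤ derivWithin (derivWithin φ s) s x₀ :=
    hmin.derivWithin_derivWithin_nonneg_s6 (convex_Icc 0 L) hφ hx₀ hcrit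
  have hbalance : (κ x₀ + derivWithin v s x₀) * φ x₀ =
      f x₀ + D x₀ * derivWithin (derivWithin φ s) s x₀ := by
    have h := heq x₀ hx₀
    rw [derivWithin_fun_mul (hD.differentiableOn one_ne_zero x₀ hx₀) (hφ₂ x₀ hx₀),
      derivWithin_fun_mul (hv.differentiableOn one_ne_zero x₀ hx₀) (hφ₁ x₀ hx₀), hcrit] at h
    linarith
  have hφx₀ : 0 ≤ φ x₀ := by
    refine nonneg_of_mul_nonneg_right ?_ (hcoef x₀ hx₀)
    rw [hbalance]
    exact add_nonneg (hfpos x₀ hx₀) (mul_nonneg (hDpos x₀ hx₀).le hconvex)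
  exact fun x hx ↦ hφx₀.trans (hmin hx)

/-- maximum principle (nonnegativity) for the stationary
advection–diffusion–reaction problem `κ φ − (D φ')' + (v φ)' = f` on `[0, L]`
with homogeneous Neumann boundary conditions `φ'(0) = φ'(L) = 0`. -/
theorem adr_nonneg_neumann (L : ℝ) (hL : 0 < L)
    (φ D v κ f : ℝ → ℝ)
    (hφ : ContDiffOn ℝ 2 φ (Set.Icc 0 L))
    (hD : ContDiffOn ℝ 1 D (Set.Icc 0 L))
    (hDpos : ∀ x ∈ Set.Icc (0 : ℝ) L, 0 < D x)
    (hv : ContDiffOn ℝ 1 v (Set.Icc 0 L))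
    (hκ : ContinuousOn κ (Set.Icc 0 L))
    (hf : ContinuousOn f (Set.Icc 0 L))
    (hfpos : ∀ x ∈ Set.Icc (0 : ℝ) L, 0 ≤ f x)
    (hcoef : ∀ x ∈ Set.Icc (0 : ℝ) L,
      0 < κ x + derivWithin v (Set.Icc 0 L) x)
    (heq : ∀ x ∈ Set.Icc (0 : ℝ) L,
      κ x * φ x
        - derivWithin (fun y => D y * derivWithin φ (Set.Icc 0 L) y)
            (Set.Icc 0 L) x
        + derivWithin (fun y => v y * φ y) (Set.Icc 0 L) x = f x)
    (hbc0 : derivWithin φ (Set.Icc 0 L) 0 = 0)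
    (hbcL : derivWithin φ (Set.Icc 0 L) L = 0) :
    ∀ x ∈ Set.Icc (0 : ℝ) L, 0 ≤ φ x :=
  adr_nonneg_neumann_general L hL φ D v κ f hφ hD hDpos hv hfpos hcoef heq hbc0 hbcL
end
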